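/- arXiv:2312.17326 — 2 statements merged into one kernel-verified Lean document; each statement's English description precedes it below -/
import Mathlib

section
/- Let m ≥ 1 and n > m be integers, let C > 0 and σ > 0 be constants, and let g : [0, ∞) → ℝ be non-decreasing with g(ζ) > 0 for all ζ > 0. Suppose (E_j)_{j ≥ 0} is a non-decreasing sequence of positive real numbers such that E_{j+1} − E_j ≥ C · 2^{jn} · g( σ · 2^{−j(n−m)} E_j ) for all j ≥ 0 and such that 2^{−j(n−m)} E_j → 0 as j → ∞. Then ∫_0^1 g(r) / r^{1 + n/(n−m)} dr < ∞. -/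
/-!
Put `b = 2^(n-m)`, `q = n/(n-m)` and `ρ_j = σ b^(-j) E_j`, so that `ρ_j → 0` and
`ρ_j ≤ b ρ_{j+1}`. The intervals `(ρ_{j+1}, ρ_j]` cover `(0, ρ_0]`, and by monotonicity of `g`
the `j`-th one contributes at most `b g(ρ_j) ρ_{j+1}^(-q)` to the integral. Since
`ρ_{j+1}^(-q) = σ^(-q) b^((j+1)q) E_{j+1}^(-q)` and `b^(jq) = 2^(jn)`, the recursion bounds this
by a constant times `(E_{j+1} - E_j) E_{j+1}^(-q) ≤ (E_j^(1-q) - E_{j+1}^(1-q)) / (q - 1)`, and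
these terms telescope.
-/

open MeasureTheory Set Filter Topology
open scoped Interval

theorem sub_mul_rpow_neg_le {q x y : ℝ} (hq : 1 < q) (hx : 0 < x) (hxy : x ≤ y) :
    (y - x) * y ^ (-q) ≤ (x ^ (1 - q) - y ^ (1 - q)) / (q - 1) := by
  have hzero : (0 : ℝ) ∉ [[x, y]] := by
    rw [uIcc_of_le hxy]; exact fun h => hx.not_ge h.1
  calc (y - x) * y ^ (-q) = ∫ _ in x..y, y ^ (-q) := by simp
    _ ≤ ∫ t in x..y, t ^ (-q) :=
      intervalIntegral.integral_mono_on hxy intervalIntegrable_const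
        (intervalIntegral.intervalIntegrable_rpow (Or.inr hzero))
        fun t ht => Real.rpow_le_rpow_of_nonpos (hx.trans_le ht.1) ht.2 (by linarith)
    _ = (x ^ (1 - q) - y ^ (1 - q)) / (q - 1) := by
      rw [integral_rpow (Or.inr ⟨by linarith, hzero⟩), neg_add_eq_sub,
        ← neg_div_neg_eq, neg_sub, neg_sub]

theorem exists_mem_Ioc_succ_of_tendsto {α : Type*} [LinearOrder α] [TopologicalSpace α]
    [OrderTopology α] {u : ℕ → α} {a : α} (hu : Tendsto u atTop (𝓝 a)) :
    Ioc a (u 0) ⊆ ⋃ k, Ioc (u (k + 1)) (u k) := by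
  intro r ⟨har, hr⟩
  have hex : ∃ j, u j < r := (hu.eventually_lt_const har).exists
  obtain ⟨k, hk⟩ : ∃ k, Nat.find hex = k + 1 :=
    Nat.exists_eq_add_one_of_ne_zero fun h => (h ▸ Nat.find_spec hex).not_ge hr
  exact mem_iUnion.2 ⟨k, hk ▸ Nat.find_spec hex, not_lt.1 (Nat.find_min hex (by omega))⟩

theorem tsum_ofReal_sub_succ_le {P : ℕ → ℝ} (hP : Antitone P) (hP0 : ∀ k, 0 ≤ P k) :
    ∑' k, ENNReal.ofReal (P k - P (k + 1)) ≤ ENNReal.ofReal (P 0) := by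
  refine ENNReal.tsum_le_of_sum_range_le fun N => ?_
  rw [← ENNReal.ofReal_sum_of_nonneg fun k _ => sub_nonneg.2 (hP k.le_succ),
    Finset.sum_range_sub']
  exact ENNReal.ofReal_le_ofReal (by linarith [hP0 N])

theorem setLIntegral_Ioc_div_rpow_le {g : ℝ → ℝ} {a b p : ℝ} (hg : MonotoneOn g (Ici 0))
    (hgb : 0 ≤ g b) (ha : 0 < a) (hp : 0 ≤ p) :
    ∫⁻ r in Ioc a b, ENNReal.ofReal (g r / r ^ p) ≤ ENNReal.ofReal (g b / a ^ p * (b - a)) := by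
  calc ∫⁻ r in Ioc a b, ENNReal.ofReal (g r / r ^ p)
      ≤ ∫⁻ _ in Ioc a b, ENNReal.ofReal (g b / a ^ p) := by
        refine setLIntegral_mono' measurableSet_Ioc fun r ⟨har, hrb⟩ => ENNReal.ofReal_le_ofReal ?_
        have hr : 0 < r := ha.trans har
        exact div_le_div₀ hgb (hg hr.le (hr.le.trans hrb) hrb) (Real.rpow_pos_of_pos ha p)
          (Real.rpow_le_rpow ha.le har.le hp)
    _ = ENNReal.ofReal (g b / a ^ p * (b - a)) := by
        rw [setLIntegral_const, Real.volume_Ioc, ← ENNReal.ofReal_mul]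
        exact div_nonneg hgb (Real.rpow_nonneg ha.le p)

theorem setLIntegral_Ioc_zero_div_rpow_le_tsum {g : ℝ → ℝ} {ρ : ℕ → ℝ} {c q : ℝ}
    (hg_mono : MonotoneOn g (Ici 0)) (hg_nonneg : ∀ ζ > 0, 0 ≤ g ζ) (hρ_pos : ∀ k, 0 < ρ k)
    (hρ_lim : Tendsto ρ atTop (𝓝 0)) (hρ_step : ∀ k, ρ k ≤ c * ρ (k + 1)) (hq : -1 ≤ q) :
    ∫⁻ r in Ioc 0 (ρ 0), ENNReal.ofReal (g r / r ^ (1 + q)) ≤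
      ∑' k, ENNReal.ofReal (c * (g (ρ k) * ρ (k + 1) ^ (-q))) := by
  refine (lintegral_mono_set (exists_mem_Ioc_succ_of_tendsto hρ_lim)).trans <|
    (lintegral_iUnion_le _ _).trans <| ENNReal.tsum_le_tsum fun k => ?_
  have hρ1 := hρ_pos (k + 1)
  have hgρ : 0 ≤ g (ρ k) := hg_nonneg _ (hρ_pos k)
  refine (setLIntegral_Ioc_div_rpow_le hg_mono hgρ hρ1 (by linarith)).trans <|
    ENNReal.ofReal_le_ofReal ?_
  calc g (ρ k) / ρ (k + 1) ^ (1 + q) * (ρ k - ρ (k + 1))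
      ≤ g (ρ k) / ρ (k + 1) ^ (1 + q) * (c * ρ (k + 1)) := by
        gcongr
        linarith [hρ_step k]
    _ = c * (g (ρ k) * ρ (k + 1) ^ (-q)) := by
        rw [Real.rpow_add hρ1, Real.rpow_one, Real.rpow_neg hρ1.le]
        field_simp

theorem mul_rpow_neg_le_of_recursion_step {g : ℝ → ℝ} {E : ℕ → ℝ} {C σ b q : ℝ} {k : ℕ}
    (hC : 0 < C) (hσ : 0 < σ) (hb : 0 < b) (hq : 1 < q) (hEk : 0 < E k) (hE : E k ≤ E (k + 1))
    (hrec : C * b ^ ((k : ℝ) * q) * g (σ * b ^ (-(k : ℝ)) * E k) ≤ E (k + 1) - E k) :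
    g (σ * b ^ (-(k : ℝ)) * E k) * (σ * b ^ (-((k + 1 : ℕ) : ℝ)) * E (k + 1)) ^ (-q) ≤
      b ^ q * σ ^ (-q) / (C * (q - 1)) * (E k ^ (1 - q) - E (k + 1) ^ (1 - q)) := by
  have hEk1 : 0 < E (k + 1) := hEk.trans_le hE
  have hscale : (σ * b ^ (-((k + 1 : ℕ) : ℝ)) * E (k + 1)) ^ (-q) =
      σ ^ (-q) * (b ^ ((k : ℝ) * q) * b ^ q) * E (k + 1) ^ (-q) := by
    rw [Real.mul_rpow (by positivity) hEk1.le, Real.mul_rpow hσ.le (by positivity),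
      ← Real.rpow_mul hb.le, ← Real.rpow_add hb]
    push_cast
    ring_nf
  calc g (σ * b ^ (-(k : ℝ)) * E k) * (σ * b ^ (-((k + 1 : ℕ) : ℝ)) * E (k + 1)) ^ (-q)
      = C * b ^ ((k : ℝ) * q) * g (σ * b ^ (-(k : ℝ)) * E k) *
          (b ^ q * σ ^ (-q) / C * E (k + 1) ^ (-q)) := by
        rw [hscale]
        field_simp
    _ ≤ (E (k + 1) - E k) * (b ^ q * σ ^ (-q) / C * E (k + 1) ^ (-q)) := by gcongr
    _ = b ^ q * σ ^ (-q) / C * ((E (k + 1) - E k) * E (k + 1) ^ (-q)) := by ring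
    _ ≤ b ^ q * σ ^ (-q) / C * ((E k ^ (1 - q) - E (k + 1) ^ (1 - q)) / (q - 1)) := by
        gcongr
        exact sub_mul_rpow_neg_le hq hEk hE
    _ = b ^ q * σ ^ (-q) / (C * (q - 1)) * (E k ^ (1 - q) - E (k + 1) ^ (1 - q)) := by
        rw [mul_comm C, ← div_div]; ring

theorem setLIntegral_Ioo_zero_one_div_rpow_lt_top_of_recursion {g : ℝ → ℝ} {E : ℕ → ℝ}
    {C σ b q : ℝ} (hC : 0 < C) (hσ : 0 < σ) (hb : 0 < b) (hq : 1 < q)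
    (hg_mono : MonotoneOn g (Ici 0)) (hg_nonneg : ∀ ζ > 0, 0 ≤ g ζ)
    (hE_pos : ∀ j, 0 < E j) (hE_mono : Monotone E)
    (hrec : ∀ j : ℕ, C * b ^ ((j : ℝ) * q) * g (σ * b ^ (-(j : ℝ)) * E j) ≤ E (j + 1) - E j)
    (hlim : Tendsto (fun j : ℕ => b ^ (-(j : ℝ)) * E j) atTop (𝓝 0)) :
    ∫⁻ r in Ioo 0 1, ENNReal.ofReal (g r / r ^ (1 + q)) < ⊤ := by
  set ρ : ℕ → ℝ := fun j => σ * b ^ (-(j : ℝ)) * E j with hρ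
  set K : ℝ := b ^ q * σ ^ (-q) / (C * (q - 1))
  have hK : 0 ≤ b * K := by have := sub_pos.2 hq; positivity
  have hρ_pos (j : ℕ) : 0 < ρ j := by have := hE_pos j; positivity
  have hρ_lim : Tendsto ρ atTop (𝓝 0) := by
    simpa only [hρ, mul_assoc, mul_zero] using hlim.const_mul σ
  have hρ_step (k : ℕ) : ρ k ≤ b * ρ (k + 1) := by
    have hpow : b * b ^ (-((k + 1 : ℕ) : ℝ)) = b ^ (-(k : ℝ)) := by
      rw [show -((k + 1 : ℕ) : ℝ) = -(k : ℝ) - 1 by push_cast; ring, Real.rpow_sub_one hb.ne']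
      field_simp
    calc ρ k ≤ σ * b ^ (-(k : ℝ)) * E (k + 1) := by
          have := hE_mono k.le_succ; simp only [hρ]; gcongr
      _ = b * ρ (k + 1) := by rw [← hpow]; ring
  have hP : Antitone fun k => E k ^ (1 - q) := fun i j hij =>
    Real.rpow_le_rpow_of_nonpos (hE_pos i) (hE_mono hij) (by linarith)
  have hsmall : ∫⁻ r in Ioc 0 (ρ 0), ENNReal.ofReal (g r / r ^ (1 + q)) ≤
      ENNReal.ofReal (b * K) * ENNReal.ofReal (E 0 ^ (1 - q)) :=
    calc ∫⁻ r in Ioc 0 (ρ 0), ENNReal.ofReal (g r / r ^ (1 + q))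
        ≤ ∑' k, ENNReal.ofReal (b * (g (ρ k) * ρ (k + 1) ^ (-q))) :=
          setLIntegral_Ioc_zero_div_rpow_le_tsum hg_mono hg_nonneg hρ_pos hρ_lim hρ_step
            (by linarith)
      _ ≤ ∑' k, ENNReal.ofReal (b * K) *
            ENNReal.ofReal (E k ^ (1 - q) - E (k + 1) ^ (1 - q)) := by
          refine ENNReal.tsum_le_tsum fun k => ?_
          rw [← ENNReal.ofReal_mul hK, mul_assoc]
          exact ENNReal.ofReal_le_ofReal <| mul_le_mul_of_nonneg_left
            (mul_rpow_neg_le_of_recursion_step hC hσ hb hq (hE_pos k) (hE_mono k.le_succ)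
              (hrec k)) hb.le
      _ ≤ ENNReal.ofReal (b * K) * ENNReal.ofReal (E 0 ^ (1 - q)) := by
          rw [ENNReal.tsum_mul_left]
          gcongr
          exact tsum_ofReal_sub_succ_le hP fun k => (Real.rpow_pos_of_pos (hE_pos k) _).le
  have hcover : Ioo (0 : ℝ) 1 ⊆ Ioc 0 (ρ 0) ∪ Ioc (ρ 0) 1 := fun r ⟨hr0, hr1⟩ =>
    (le_or_gt r (ρ 0)).imp (fun h => ⟨hr0, h⟩) fun h => ⟨h, hr1.le⟩
  calc ∫⁻ r in Ioo 0 1, ENNReal.ofReal (g r / r ^ (1 + q))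
      ≤ ∫⁻ r in Ioc 0 (ρ 0) ∪ Ioc (ρ 0) 1, ENNReal.ofReal (g r / r ^ (1 + q)) :=
        lintegral_mono_set hcover
    _ ≤ (∫⁻ r in Ioc 0 (ρ 0), ENNReal.ofReal (g r / r ^ (1 + q))) +
          ∫⁻ r in Ioc (ρ 0) 1, ENNReal.ofReal (g r / r ^ (1 + q)) :=
        lintegral_union_le _ _ _
    _ < ⊤ := ENNReal.add_lt_top.2
        ⟨hsmall.trans_lt (ENNReal.mul_lt_top ENNReal.ofReal_lt_top ENNReal.ofReal_lt_top),
          (setLIntegral_Ioc_div_rpow_le hg_mono (hg_nonneg 1 one_pos) (hρ_pos 0)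
            (by linarith)).trans_lt ENNReal.ofReal_lt_top⟩

/-- The discrete iteration argument in the proof of Theorem 2.1: if a non-decreasing
positive sequence `(E_j)` satisfies `E_{j+1} - E_j ≥ C 2^{jn} g (σ 2^{-j(n-m)} E_j)` and
`2^{-j(n-m)} E_j → 0`, then the Dini integral `∫_0^1 g(r) / r^{1 + n/(n-m)} dr` is finite. -/
theorem dini_integral_finite_of_iteration (m n : ℕ) (hm : 1 ≤ m) (hmn : m < n)
    (C σ : ℝ) (hC : 0 < C) (hσ : 0 < σ)
    (g : ℝ → ℝ) (hg_mono : MonotoneOn g (Ici 0)) (hg_pos : ∀ ζ > 0, 0 < g ζ)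
    (E : ℕ → ℝ) (hE_pos : ∀ j, 0 < E j) (hE_mono : Monotone E)
    (hrec : ∀ j : ℕ,
      C * 2 ^ (j * n) * g (σ * (2 : ℝ) ^ (-(j : ℤ) * ((n : ℤ) - (m : ℤ))) * E j) ≤
        E (j + 1) - E j)
    (hlim : Tendsto (fun j : ℕ => (2 : ℝ) ^ (-(j : ℤ) * ((n : ℤ) - (m : ℤ))) * E j)
      atTop (𝓝 0)) :
    ∫⁻ r in Ioo (0 : ℝ) 1,
      ENNReal.ofReal (g r / r ^ (1 + (n : ℝ) / ((n : ℝ) - (m : ℝ)))) < ⊤ := by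
  have hgap : (0 : ℝ) < n - m := sub_pos.2 (by exact_mod_cast hmn)
  have hq : 1 < (n : ℝ) / (n - m) := by
    rw [one_lt_div hgap]; linarith [show (1 : ℝ) ≤ m by exact_mod_cast hm]
  have hzpow (j : ℕ) : (2 : ℝ) ^ (-(j : ℤ) * ((n : ℤ) - (m : ℤ))) =
      ((2 : ℝ) ^ ((n : ℝ) - m)) ^ (-(j : ℝ)) := by
    rw [← Real.rpow_mul zero_le_two, ← Real.rpow_intCast]; push_cast; ring_nf
  have hpow (j : ℕ) :
      (2 : ℝ) ^ (j * n) = ((2 : ℝ) ^ ((n : ℝ) - m)) ^ ((j : ℝ) * (n / (n - m))) := by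
    rw [← Real.rpow_mul zero_le_two, ← Real.rpow_natCast]; push_cast; field_simp
  exact setLIntegral_Ioo_zero_one_div_rpow_lt_top_of_recursion (b := 2 ^ ((n : ℝ) - m))
    hC hσ (by positivity) hq hg_mono (fun ζ hζ => (hg_pos ζ hζ).le) hE_pos hE_mono
    (fun j => by simpa only [hzpow, hpow] using hrec j) (by simpa only [hzpow] using hlim)
end

section
/- Let m ≥ 1 and n > m be integers, let σ > 0, and let g : (0, ∞) → ℝ be non-decreasing with g(ζ) > 0 for all ζ > 0. Define h(ζ) = g(ζ) / ζ^{n/(n−m)} and h̃(ζ) = inf { h(t) : ζ < t < 2^{n−m} ζ } for ζ > 0. Then for all real numbers 0 < b ≤ a ≤ 2^{n−m} b, one has (h(σa)/a) · (a − b) ≥ 2^{−(n−m)} ∫_b^a h̃(σζ)/ζ dζ. -/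
open MeasureTheory Set

/-- For `h(ζ) = g(ζ) / ζ^{n/(n-m)}` and `h̃(ζ) = inf_{(ζ, 2^{n-m} ζ)} h`: for all
`0 < b ≤ a ≤ 2^{n-m} b`, one has
`(h(σ a) / a) (a - b) ≥ 2^{-(n-m)} ∫_b^a h̃(σ ζ) / ζ dζ`. -/
theorem h_tilde_integral_estimate (m n : ℕ) (hm : 1 ≤ m) (hmn : m < n)
    (σ : ℝ) (hσ : 0 < σ)
    (g : ℝ → ℝ) (hg_mono : MonotoneOn g (Ioi 0)) (hg_pos : ∀ ζ > 0, 0 < g ζ)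
    (a b : ℝ) (hb : 0 < b) (hba : b ≤ a) (hab : a ≤ 2 ^ (n - m) * b) :
    (2 : ℝ) ^ (-((n : ℤ) - (m : ℤ))) *
        ∫ ζ in Ioo b a,
          sInf ((fun t => g t / t ^ ((n : ℝ) / ((n : ℝ) - (m : ℝ)))) ''
            Ioo (σ * ζ) (2 ^ (n - m) * (σ * ζ))) / ζ ≤
      g (σ * a) / (σ * a) ^ ((n : ℝ) / ((n : ℝ) - (m : ℝ))) / a * (a - b) := by
  set P : ℝ := (n : ℝ) / ((n : ℝ) - (m : ℝ)) with hP
  set h : ℝ → ℝ := fun t => g t / t ^ P with hhdef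
  have ha : 0 < a := lt_of_lt_of_le hb hba
  have hσa : 0 < σ * a := mul_pos hσ ha
  have h2k : (0 : ℝ) < 2 ^ (n - m) := by positivity
  have hhpos : ∀ t > (0:ℝ), 0 ≤ h t := fun t ht =>
    le_of_lt (div_pos (hg_pos t ht) (Real.rpow_pos_of_pos ht P))
  set H : ℝ := h (σ * a) with hHdef
  have hH0 : 0 ≤ H := hhpos _ hσa
  set C : ℝ := 2 ^ (n - m) * (H / a) with hC
  have hC0 : 0 ≤ C := mul_nonneg h2k.le (div_nonneg hH0 ha.le)
  have key : ∀ ζ ∈ Ioo b a,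
      0 ≤ sInf (h '' Ioo (σ * ζ) (2 ^ (n - m) * (σ * ζ))) / ζ ∧
      sInf (h '' Ioo (σ * ζ) (2 ^ (n - m) * (σ * ζ))) / ζ ≤ C := by
    intro ζ hζ
    obtain ⟨hbζ, hζa⟩ := hζ
    have hζ0 : 0 < ζ := hb.trans hbζ
    have hσζ : 0 < σ * ζ := mul_pos hσ hζ0
    have hmem : σ * a ∈ Ioo (σ * ζ) (2 ^ (n - m) * (σ * ζ)) := by
      constructor
      · exact mul_lt_mul_of_pos_left hζa hσ
      · nlinarith
    have hbdd : BddBelow (h '' Ioo (σ * ζ) (2 ^ (n - m) * (σ * ζ))) := by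
      refine ⟨0, ?_⟩
      rintro x ⟨t, ht, rfl⟩
      exact hhpos t (hσζ.trans ht.1)
    have h1 : sInf (h '' Ioo (σ * ζ) (2 ^ (n - m) * (σ * ζ))) ≤ H :=
      csInf_le hbdd ⟨_, hmem, rfl⟩
    have h0 : 0 ≤ sInf (h '' Ioo (σ * ζ) (2 ^ (n - m) * (σ * ζ))) := by
      refine le_csInf ⟨_, ⟨_, hmem, rfl⟩⟩ ?_
      rintro x ⟨t, ht, rfl⟩
      exact hhpos t (hσζ.trans ht.1)
    constructor
    · exact div_nonneg h0 hζ0.le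
    · rw [div_le_iff₀ hζ0]
      have hHC : H ≤ C * ζ := by
        have hCζ : C * ζ = 2 ^ (n - m) * H * ζ / a := by rw [hC]; ring
        rw [hCζ, le_div_iff₀ ha]
        nlinarith [mul_le_mul_of_nonneg_left hab hH0,
          mul_le_mul_of_nonneg_left hbζ.le (mul_nonneg h2k.le hH0)]
      linarith
  have hmeas : MeasurableSet (Ioo b a) := measurableSet_Ioo
  have hint : (∫ ζ in Ioo b a,
      sInf (h '' Ioo (σ * ζ) (2 ^ (n - m) * (σ * ζ))) / ζ) ≤ C * (a - b) := by
    have hnorm : ‖∫ ζ in Ioo b a,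
        sInf (h '' Ioo (σ * ζ) (2 ^ (n - m) * (σ * ζ))) / ζ‖ ≤
        C * ((volume.restrict (Ioo b a)) univ).toReal := by
      haveI : IsFiniteMeasure (volume.restrict (Ioo b a)) :=
        ⟨by rw [Measure.restrict_apply_univ]; exact measure_Ioo_lt_top⟩
      apply norm_integral_le_of_norm_le_const
      filter_upwards [ae_restrict_mem hmeas] with ζ hζ
      rw [Real.norm_eq_abs, abs_of_nonneg (key ζ hζ).1]
      exact (key ζ hζ).2
    rw [Measure.restrict_apply_univ] at hnorm
    have hvol : (volume (Ioo b a)).toReal = a - b := by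
      rw [Real.volume_Ioo, ENNReal.toReal_ofReal (by linarith)]
    calc (∫ ζ in Ioo b a, sInf (h '' Ioo (σ * ζ) (2 ^ (n - m) * (σ * ζ))) / ζ)
        ≤ ‖∫ ζ in Ioo b a, sInf (h '' Ioo (σ * ζ) (2 ^ (n - m) * (σ * ζ))) / ζ‖ :=
          le_abs_self _
      _ ≤ C * (volume (Ioo b a)).toReal := hnorm
      _ = C * (a - b) := by rw [hvol]
  have hzpow : (2 : ℝ) ^ (-((n : ℤ) - (m : ℤ))) = ((2 : ℝ) ^ (n - m))⁻¹ := by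
    rw [zpow_neg, ← zpow_natCast]
    congr 1
    congr 1
    omega
  have hzpos : (0 : ℝ) < (2 : ℝ) ^ (-((n : ℤ) - (m : ℤ))) := by
    rw [hzpow]; positivity
  calc (2 : ℝ) ^ (-((n : ℤ) - (m : ℤ))) *
        ∫ ζ in Ioo b a, sInf (h '' Ioo (σ * ζ) (2 ^ (n - m) * (σ * ζ))) / ζ
      ≤ (2 : ℝ) ^ (-((n : ℤ) - (m : ℤ))) * (C * (a - b)) :=
        mul_le_mul_of_nonneg_left hint hzpos.le
    _ = H / a * (a - b) := by
        rw [hzpow, hC]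
        field_simp
    _ = g (σ * a) / (σ * a) ^ P / a * (a - b) := rfl
end
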